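/- arXiv:1510.04129 — 2 statements merged into one kernel-verified Lean document; each statement's English description precedes it below -/
import Mathlib

section
/- For all 1 ≤ i ≠ j ≤ n+1, the operator T_{i,j}∘T_{j,i} − T_{j,i}∘T_{i,j} on R equals the operator of multiplication by the polynomial h_i − h_j. -/
open MvPolynomial

/-- The generators `h_1, …, h_n` of `R = ℂ[h_1,…,h_n]`, together with
`h_{n+1} := -(h_1 + ⋯ + h_n)`.  Indices: `i : Fin (n+1)` with `(i : ℕ) < n`
corresponding to `h_1, …, h_n` and `i = Fin.last n` to `h_{n+1}`. -/
noncomputable def Hp (n : ℕ) (i : Fin (n + 1)) : MvPolynomial (Fin n) ℂ :=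
  if h : (i : ℕ) < n then X ⟨i, h⟩ else -∑ j : Fin n, X j

/-- The automorphism `σ_i` of `R` determined by `σ_i(h_k) = h_k - δ_{k,i}` for `1 ≤ i ≤ n`,
and `σ_{n+1} = id`. -/
noncomputable def sigma (n : ℕ) (i : Fin (n + 1)) :
    MvPolynomial (Fin n) ℂ ≃ₐ[ℂ] MvPolynomial (Fin n) ℂ :=
  if h : (i : ℕ) < n then
    AlgEquiv.ofAlgHom
      (aeval fun k => X k - if k = ⟨i, h⟩ then 1 else 0)
      (aeval fun k => X k + if k = ⟨i, h⟩ then 1 else 0)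
      (by ext k : 1; by_cases hk : k = ⟨i, h⟩ <;> simp [hk])
      (by ext k : 1; by_cases hk : k = ⟨i, h⟩ <;> simp [hk])
  else AlgEquiv.refl

/-- The operator `T_{i,j}` on `R`:
`T_{i,j}(f) = a_i a_j⁻¹ (δ_{i∈S} + δ_{i∉S}(h_i - b - 1)) (δ_{j∈S}(h_j - b) + δ_{j∉S}) σ_i(σ_j⁻¹(f))`. -/
noncomputable def T (n : ℕ) (b : ℂ) (S : Finset (Fin (n + 1))) (a : Fin (n + 1) → ℂ)
    (i j : Fin (n + 1)) (f : MvPolynomial (Fin n) ℂ) : MvPolynomial (Fin n) ℂ :=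
  (a i * (a j)⁻¹) • ((if i ∈ S then 1 else Hp n i - C b - 1)
    * (if j ∈ S then Hp n j - C b else 1) * sigma n i ((sigma n j).symm f))

/-!
Write `τ = σ_i ∘ σ_j⁻¹`. In `T_{i,j} T_{j,i}` the automorphisms cancel, since `σ_j⁻¹ σ_j = id`,
and the scalars cancel, so the composite is multiplication by a polynomial, obtained by applying
`τ` to the factors of `T_{j,i}`. As `τ` sends `h_i ↦ h_i - 1` and `h_j ↦ h_j + 1`, that polynomial
is `(h_i - b - 1)(h_j - b)` whether or not `i, j ∈ S`. The commutator is therefore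
`(h_i - b - 1)(h_j - b) - (h_j - b - 1)(h_i - b) = h_i - h_j`.
-/

section Shift

variable {n : ℕ}

theorem sigma_Hp (i k : Fin (n + 1)) :
    sigma n i (Hp n k) = Hp n k - (if k = i then 1 else 0) + (if k = Fin.last n then 1 else 0) := by
  by_cases hi : (i : ℕ) < n
  · rw [sigma, dif_pos hi]
    by_cases hk : (k : ℕ) < n
    · have hk_last : k ≠ Fin.last n := Fin.ne_of_lt hk
      have hk_eq : (⟨k, hk⟩ : Fin n) = ⟨i, hi⟩ ↔ k = i := by simp [Fin.ext_iff]
      simp [Hp, dif_pos hk, hk_eq, hk_last]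
    · obtain rfl : k = Fin.last n := Fin.ext (by have := k.isLt; simp; omega)
      have hi_last : Fin.last n ≠ i := (Fin.ne_of_lt hi).symm
      simp only [Hp, dif_neg hk]
      simp [hi_last, Finset.sum_sub_distrib]
      abel
  · obtain rfl : i = Fin.last n := Fin.ext (by have := i.isLt; simp; omega)
    simp [sigma]

theorem sigma_symm_Hp (i k : Fin (n + 1)) :
    (sigma n i).symm (Hp n k) =
      Hp n k + (if k = i then 1 else 0) - (if k = Fin.last n then 1 else 0) := by
  rw [(sigma n i).symm_apply_eq]
  simp only [map_sub, map_add, sigma_Hp, apply_ite (sigma n i), map_one, map_zero]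
  abel

theorem sigma_sigma_symm_Hp (i j k : Fin (n + 1)) :
    sigma n i ((sigma n j).symm (Hp n k)) =
      Hp n k - (if k = i then 1 else 0) + (if k = j then 1 else 0) := by
  simp only [sigma_symm_Hp, map_sub, map_add, sigma_Hp, apply_ite (sigma n i), map_one,
    map_zero]
  abel

theorem sigma_sigma_symm_Hp_left {i j : Fin (n + 1)} (hij : i ≠ j) :
    sigma n i ((sigma n j).symm (Hp n i)) = Hp n i - 1 := by
  simp [sigma_sigma_symm_Hp, hij]

theorem sigma_sigma_symm_Hp_right {i j : Fin (n + 1)} (hij : i ≠ j) :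
    sigma n i ((sigma n j).symm (Hp n j)) = Hp n j + 1 := by
  simp [sigma_sigma_symm_Hp, hij.symm]

theorem sigma_sigma_symm_C (i j : Fin (n + 1)) (c : ℂ) :
    sigma n i ((sigma n j).symm (C c)) = C c := by
  simp only [← algebraMap_eq, AlgEquiv.commutes]

end Shift

variable {n : ℕ} {b : ℂ} {S : Finset (Fin (n + 1))} {a : Fin (n + 1) → ℂ} {i j : Fin (n + 1)}

theorem ite_mul_sigma_sigma_symm_ite_left (hij : i ≠ j) :
    (if i ∈ S then 1 else Hp n i - C b - 1) *
      sigma n i ((sigma n j).symm (if i ∈ S then Hp n i - C b else 1)) = Hp n i - C b - 1 := by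
  split_ifs <;> simp [sigma_sigma_symm_Hp_left hij, sigma_sigma_symm_C]
  ring

theorem ite_mul_sigma_sigma_symm_ite_right (hij : i ≠ j) :
    (if j ∈ S then Hp n j - C b else 1) *
      sigma n i ((sigma n j).symm (if j ∈ S then 1 else Hp n j - C b - 1)) = Hp n j - C b := by
  split_ifs <;> simp [sigma_sigma_symm_Hp_right hij, sigma_sigma_symm_C]
  ring

theorem T_T_apply (hai : a i ≠ 0) (haj : a j ≠ 0) (hij : i ≠ j) (f : MvPolynomial (Fin n) ℂ) :
    T n b S a i j (T n b S a j i f) = (Hp n i - C b - 1) * (Hp n j - C b) * f := by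
  have hscalar : a i * (a j)⁻¹ * (a j * (a i)⁻¹) = 1 := by field_simp
  simp only [T, map_smul, map_mul, AlgEquiv.symm_apply_apply, AlgEquiv.apply_symm_apply,
    mul_smul_comm, smul_smul, hscalar, one_smul]
  linear_combination congrArg₂ (· * · * f) (ite_mul_sigma_sigma_symm_ite_left (S := S) hij)
    (ite_mul_sigma_sigma_symm_ite_right (S := S) hij)

theorem statement6_general (n : ℕ) (b : ℂ) (S : Finset (Fin (n + 1)))
    (a : Fin (n + 1) → ℂ) (ha : ∀ j, a j ≠ 0)
    (i j : Fin (n + 1)) (hij : i ≠ j) (f : MvPolynomial (Fin n) ℂ) :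
    T n b S a i j (T n b S a j i f) - T n b S a j i (T n b S a i j f)
      = (Hp n i - Hp n j) * f := by
  rw [T_T_apply (ha i) (ha j) hij, T_T_apply (ha j) (ha i) hij.symm]
  ring

/-- For all `1 ≤ i ≠ j ≤ n+1`, the operator `T_{i,j} ∘ T_{j,i} - T_{j,i} ∘ T_{i,j}` on `R`
is multiplication by the polynomial `h_i - h_j` (stated pointwise). -/
theorem statement6 (n : ℕ) (hn : 1 ≤ n) (b : ℂ) (S : Finset (Fin (n + 1)))
    (a : Fin (n + 1) → ℂ) (ha : ∀ j, a j ≠ 0) (halast : a (Fin.last n) = 1)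
    (i j : Fin (n + 1)) (hij : i ≠ j) (f : MvPolynomial (Fin n) ℂ) :
    T n b S a i j (T n b S a j i f) - T n b S a j i (T n b S a i j f)
      = (Hp n i - Hp n j) * f :=
  statement6_general n b S a ha i j hij f
end

section
/- Suppose n+1 ∈ S, and let m̄ ∈ ℤ_{≥0}^{n+1} and N ∈ ℤ_{≥0} with N ≥ |m̄| + 1. Then the following identities hold in R: for every 1 ≤ j ≤ n, a_j^{−1}·(m_j+1)·σ_j^{−1}(P'_{m̄+ε_j}(S,a)) = (h_{n+1} − b − 1)·Δ_{m̄}(S,a) if j ∈ S, and a_j^{−1}·(m_j+1)·σ_j^{−1}(P'_{m̄+ε_j}(S,a)) = (h_j − b)·(h_{n+1} − b − 1)·Δ_{m̄}(S,a) if j ∉ S; moreover (m_{n+1}+1)·P'_{m̄+ε_{n+1}}(S,a) = (h_{n+1} + nb)·Δ_{m̄}(S,a). -/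
/-!
The automorphism `σ_j⁻¹` raises `h_j` by one, lowers `h_{n+1} = -(h_1 + ⋯ + h_n)` by one and
fixes every other `h_s`. Applied to `P'_{m̄+ε_j}`, it shifts each block of linear factors by one,
and peeling off one factor puts every block into the shape of the corresponding block of
`Δ_{m̄}`: the extra factor at `s = j` (present only when `j ∉ S`) becomes `h_j - b`, the block `C`
(nonempty because `N > m_{n+1}`) gives up its first factor `h_{n+1} - b - 1`, and the last block
becomes `∏ (h_{n+1} + nb - t)`. The scalar `a_j⁻¹ (m_j + 1)` turns `a^{m̄+ε_j}/(m̄+ε_j)!` into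
`a^{m̄}/m̄!`. For `j = n+1` nothing is shifted: the last block gains the factor `h_{n+1} + nb`
and `C` loses one.
-/

open MvPolynomial

/-- The scalar `a^{m̄}/m̄!`. -/
noncomputable def coef (n : ℕ) (a : Fin (n + 1) → ℂ) (m : Fin (n + 1) → ℕ) : ℂ :=
  (∏ j, a j ^ m j) / ((∏ j, (m j).factorial : ℕ) : ℂ)

/-- `P_{m̄}(S,a) = (a^{m̄}/m̄!) ∏_{s ∉ S} ∏_{k=1}^{m_s} (h_s - b - k)`. -/
noncomputable def Pm (n : ℕ) (b : ℂ) (S : Finset (Fin (n + 1))) (a : Fin (n + 1) → ℂ)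
    (m : Fin (n + 1) → ℕ) : MvPolynomial (Fin n) ℂ :=
  coef n a m • ∏ s ∈ Sᶜ, ∏ k ∈ Finset.range (m s), (Hp n s - C (b + k + 1))

/-- `P'_{m̄}(S,a) = (a^{m̄}/m̄!) ∏_{s∉S, s≠n+1} ∏_{k=1}^{m_s}(h_s - b - k) ⋅ C ⋅`
`∏_{t=1}^{m_{n+1}}(h_{n+1} + nb - t + 1)`, where
`C = ∏_{r=1}^{N-m_{n+1}}(h_{n+1} - b - 1 + r)` if `n+1 ∈ S` and `C = 1` otherwise. -/
noncomputable def P' (n : ℕ) (b : ℂ) (S : Finset (Fin (n + 1))) (a : Fin (n + 1) → ℂ)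
    (N : ℕ) (m : Fin (n + 1) → ℕ) : MvPolynomial (Fin n) ℂ :=
  coef n a m •
    ((∏ s ∈ Sᶜ.erase (Fin.last n), ∏ k ∈ Finset.range (m s), (Hp n s - C (b + k + 1)))
      * (if Fin.last n ∈ S then
            ∏ r ∈ Finset.range (N - m (Fin.last n)), (Hp n (Fin.last n) - C (b - r))
          else 1)
      * ∏ t ∈ Finset.range (m (Fin.last n)), (Hp n (Fin.last n) + C ((n : ℂ) * b - t)))

/-- `Δ_{m̄}(S,a) = (a^{m̄}/m̄!) ∏_{s∉S} ∏_{k=1}^{m_s}(h_s - b - k) ⋅`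
`∏_{r=2}^{N-m_{n+1}}(h_{n+1} - b - 2 + r) ⋅ ∏_{t=1}^{m_{n+1}}(h_{n+1} + nb - t)`. -/
noncomputable def Δm (n : ℕ) (b : ℂ) (S : Finset (Fin (n + 1))) (a : Fin (n + 1) → ℂ)
    (N : ℕ) (m : Fin (n + 1) → ℕ) : MvPolynomial (Fin n) ℂ :=
  coef n a m •
    ((∏ s ∈ Sᶜ, ∏ k ∈ Finset.range (m s), (Hp n s - C (b + k + 1)))
      * (∏ r ∈ Finset.range (N - m (Fin.last n) - 1), (Hp n (Fin.last n) - C (b - r)))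
      * ∏ t ∈ Finset.range (m (Fin.last n)), (Hp n (Fin.last n) + C ((n : ℂ) * b - t - 1)))

/-- `Θ_{m̄}(S,a) = (a^{m̄}/m̄!) ∏_{s∉S, s≠n+1} ∏_{k=1}^{m_s}(h_s - b - k) ⋅`
`∏_{k=1}^{m_{n+1}}(h_{n+1} - b - k - 1)`. -/
noncomputable def Θm (n : ℕ) (b : ℂ) (S : Finset (Fin (n + 1))) (a : Fin (n + 1) → ℂ)
    (m : Fin (n + 1) → ℕ) : MvPolynomial (Fin n) ℂ :=
  coef n a m •
    ((∏ s ∈ Sᶜ.erase (Fin.last n), ∏ k ∈ Finset.range (m s), (Hp n s - C (b + k + 1)))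
      * ∏ k ∈ Finset.range (m (Fin.last n)), (Hp n (Fin.last n) - C (b + k + 2)))

/-- `Υ_{m̄}(S,a) = (a^{m̄}/m̄!) ∏_{s∉S, s≠n+1} ∏_{k=1}^{m_s}(h_s - b - k) ⋅`
`∏_{t=1}^{m_{n+1}}(h_{n+1} + nb - t)`. -/
noncomputable def Υm (n : ℕ) (b : ℂ) (S : Finset (Fin (n + 1))) (a : Fin (n + 1) → ℂ)
    (m : Fin (n + 1) → ℕ) : MvPolynomial (Fin n) ℂ :=
  coef n a m •
    ((∏ s ∈ Sᶜ.erase (Fin.last n), ∏ k ∈ Finset.range (m s), (Hp n s - C (b + k + 1)))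
      * ∏ t ∈ Finset.range (m (Fin.last n)), (Hp n (Fin.last n) + C ((n : ℂ) * b - t - 1)))

/-- `h̄_i = h_i - δ_{i,n+1}`. -/
noncomputable def Hbar (n : ℕ) (i : Fin (n + 1)) : MvPolynomial (Fin n) ℂ :=
  Hp n i - if i = Fin.last n then 1 else 0

/-- The `(n+1) × (n+1)` matrix `A(λ,b,S,N)` with entries in `R`:
`A_{ii} = h̄_i - λ - N + 2` and, for `i ≠ j`,
`A_{ij} = (δ_{i∈S} + δ_{i∉S}(h̄_i - b)) (δ_{j∈S}(h̄_j - b) + δ_{j∉S})`. -/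
noncomputable def Amat (n : ℕ) (lam b : ℂ) (S : Finset (Fin (n + 1))) (N : ℕ) :
    Matrix (Fin (n + 1)) (Fin (n + 1)) (MvPolynomial (Fin n) ℂ) :=
  fun i j =>
    if i = j then Hbar n i - C (lam + N - 2)
    else (if i ∈ S then 1 else Hbar n i - C b) * (if j ∈ S then Hbar n j - C b else 1)

section SigmaSymm

variable {n : ℕ} {j : Fin (n + 1)}

lemma sigma_symm_X (hj : (j : ℕ) < n) (k : Fin n) :
    (sigma n j).symm (X k) = X k + if k = ⟨j, hj⟩ then 1 else 0 := by
  rw [sigma, dif_pos hj, AlgEquiv.ofAlgHom_symm_apply, aeval_X]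

lemma sigma_symm_Hp_self (hj : (j : ℕ) < n) : (sigma n j).symm (Hp n j) = Hp n j + 1 := by
  rw [Hp, dif_pos hj, sigma_symm_X hj, if_pos rfl]

lemma sigma_symm_Hp_of_ne (hj : (j : ℕ) < n) {s : Fin (n + 1)} (hs : s ≠ Fin.last n)
    (hsj : s ≠ j) : (sigma n j).symm (Hp n s) = Hp n s := by
  have hs' : (s : ℕ) < n := Fin.val_lt_last hs
  have hsj' : (⟨s, hs'⟩ : Fin n) ≠ ⟨j, hj⟩ := fun h => hsj (Fin.ext (Fin.mk.inj h))
  rw [Hp, dif_pos hs', sigma_symm_X hj, if_neg hsj', add_zero]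

lemma sigma_symm_Hp_last (hj : (j : ℕ) < n) :
    (sigma n j).symm (Hp n (Fin.last n)) = Hp n (Fin.last n) - 1 := by
  simp only [Hp, Fin.val_last, lt_irrefl, dif_neg, not_false_eq_true, map_neg, map_sum,
    sigma_symm_X hj, Finset.sum_add_distrib, Finset.sum_ite_eq', Finset.mem_univ, if_true]
  ring

lemma sigma_symm_C (c : ℂ) : (sigma n j).symm (C c) = C c :=
  (sigma n j).symm.commutes c

lemma sigma_symm_prod_sub_C {ι : Type*} (s : Finset ι) (x : MvPolynomial (Fin n) ℂ)
    (c : ι → ℂ) :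
    (sigma n j).symm (∏ k ∈ s, (x - C (c k))) = ∏ k ∈ s, ((sigma n j).symm x - C (c k)) := by
  simp only [map_prod, map_sub (sigma n j).symm, sigma_symm_C]

lemma sigma_symm_prod_add_C {ι : Type*} (s : Finset ι) (x : MvPolynomial (Fin n) ℂ)
    (c : ι → ℂ) :
    (sigma n j).symm (∏ k ∈ s, (x + C (c k))) = ∏ k ∈ s, ((sigma n j).symm x + C (c k)) := by
  simp only [map_prod, map_add (sigma n j).symm, sigma_symm_C]

end SigmaSymm

section ShiftedProducts

variable {σ K : Type*} [CommRing K] (x : MvPolynomial σ K)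

lemma prod_range_succ_add_one_sub_C (c : K) (M : ℕ) :
    ∏ k ∈ Finset.range (M + 1), (x + 1 - C (c + k + 1))
      = (x - C c) * ∏ k ∈ Finset.range M, (x - C (c + k + 1)) := by
  rw [Finset.prod_range_succ', mul_comm]
  congr 1
  · simp
  · refine Finset.prod_congr rfl fun k _ => ?_
    simp only [map_add, map_one, map_natCast, Nat.cast_add, Nat.cast_one]
    ring

lemma prod_range_succ_sub_one_sub_C (c : K) (M : ℕ) :
    ∏ k ∈ Finset.range (M + 1), (x - 1 - C (c - k))
      = (x - C c - 1) * ∏ k ∈ Finset.range M, (x - C (c - k)) := by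
  rw [Finset.prod_range_succ', mul_comm]
  congr 1
  · simp only [Nat.cast_zero, sub_zero]; ring
  · refine Finset.prod_congr rfl fun k _ => ?_
    simp only [map_sub, map_add, map_one, map_natCast, Nat.cast_add, Nat.cast_one]
    ring

lemma prod_range_succ_add_C_sub (d : K) (M : ℕ) :
    ∏ k ∈ Finset.range (M + 1), (x + C (d - k))
      = (x + C d) * ∏ k ∈ Finset.range M, (x + C (d - k - 1)) := by
  rw [Finset.prod_range_succ', mul_comm]
  congr 1
  · simp
  · refine Finset.prod_congr rfl fun k _ => ?_
    simp only [map_sub, map_add, map_one, map_natCast, Nat.cast_add, Nat.cast_one]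
    ring

end ShiftedProducts

lemma inv_mul_coef_add_single {n : ℕ} {a : Fin (n + 1) → ℂ} {j : Fin (n + 1)} (haj : a j ≠ 0)
    (m : Fin (n + 1) → ℕ) :
    (a j)⁻¹ * (m j + 1 : ℂ) * coef n a (fun l => m l + if l = j then 1 else 0) = coef n a m := by
  have hpow : ∏ l, a l ^ (m l + if l = j then 1 else 0) = a j * ∏ l, a l ^ m l := by
    simp only [pow_add, Finset.prod_mul_distrib, pow_ite, pow_one, pow_zero,
      Fintype.prod_ite_eq', mul_comm]
  have hfact : ∏ l, (m l + if l = j then 1 else 0).factorial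
      = (m j + 1) * ∏ l, (m l).factorial := by
    rw [Fintype.prod_eq_mul_prod_compl j,
      Fintype.prod_eq_mul_prod_compl j (fun l => (m l).factorial), if_pos rfl, Nat.factorial_succ, mul_assoc]
    congr 2
    refine Finset.prod_congr rfl fun l hl => ?_
    rw [if_neg (Finset.mem_compl.1 hl ∘ Finset.mem_singleton.2), add_zero]
  have hm : (m j + 1 : ℂ) ≠ 0 := Nat.cast_add_one_ne_zero (m j)
  rw [coef, coef, hpow, hfact]
  push_cast
  field_simp

section Identities

variable {n : ℕ} {b : ℂ} {S : Finset (Fin (n + 1))} {a : Fin (n + 1) → ℂ} {N : ℕ}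
  {m : Fin (n + 1) → ℕ}

lemma sigma_symm_prod_Hp_of_ne {j s : Fin (n + 1)} (hj : (j : ℕ) < n) (hs : s ≠ Fin.last n)
    (hsj : s ≠ j) (M : ℕ) (c : ℕ → ℂ) :
    (sigma n j).symm (∏ k ∈ Finset.range M, (Hp n s - C (c k)))
      = ∏ k ∈ Finset.range M, (Hp n s - C (c k)) := by
  rw [sigma_symm_prod_sub_C, sigma_symm_Hp_of_ne hj hs hsj]

lemma sigma_symm_prod_compl_add_single {j : Fin (n + 1)} (hj : (j : ℕ) < n)
    (hS : Fin.last n ∈ S) :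
    (sigma n j).symm (∏ s ∈ Sᶜ.erase (Fin.last n),
        ∏ k ∈ Finset.range (m s + if s = j then 1 else 0), (Hp n s - C (b + k + 1)))
      = (if j ∈ S then 1 else Hp n j - C b)
          * ∏ s ∈ Sᶜ, ∏ k ∈ Finset.range (m s), (Hp n s - C (b + k + 1)) := by
  have hne : ∀ s ∈ Sᶜ, s ≠ Fin.last n := fun s hs h => Finset.mem_compl.1 hs (h ▸ hS)
  rw [Finset.erase_eq_of_notMem (Finset.notMem_compl.2 hS), map_prod]
  split_ifs with hjS
  · rw [one_mul]
    refine Finset.prod_congr rfl fun s hs => ?_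
    have hsj : s ≠ j := fun h => Finset.mem_compl.1 hs (h ▸ hjS)
    rw [if_neg hsj, add_zero, sigma_symm_prod_Hp_of_ne hj (hne s hs) hsj]
  · have hjc : j ∈ Sᶜ := Finset.mem_compl.2 hjS
    rw [← Finset.mul_prod_erase _ _ hjc, ← Finset.mul_prod_erase _ _ hjc, ← mul_assoc, if_pos rfl]
    congr 1
    · rw [sigma_symm_prod_sub_C, sigma_symm_Hp_self hj]
      exact prod_range_succ_add_one_sub_C _ b (m j)
    · refine Finset.prod_congr rfl fun s hs => ?_
      have hsj : s ≠ j := Finset.ne_of_mem_erase hs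
      rw [if_neg hsj, add_zero,
        sigma_symm_prod_Hp_of_ne hj (hne s (Finset.mem_of_mem_erase hs)) hsj]

lemma sigma_symm_P'_add_single {j : Fin (n + 1)} (hj : (j : ℕ) < n) (hS : Fin.last n ∈ S)
    (haj : a j ≠ 0) (hN : m (Fin.last n) < N) :
    ((a j)⁻¹ * (m j + 1 : ℂ)) •
        (sigma n j).symm (P' n b S a N (fun l => m l + if l = j then 1 else 0))
      = (if j ∈ S then 1 else Hp n j - C b)
          * ((Hp n (Fin.last n) - C b - 1) * Δm n b S a N m) := by
  obtain ⟨K, hK⟩ : ∃ K, N - m (Fin.last n) = K + 1 := ⟨N - m (Fin.last n) - 1, by omega⟩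
  have hjl : Fin.last n ≠ j := fun h => (h ▸ hj).ne (Fin.val_last n)
  have hB : (sigma n j).symm (∏ r ∈ Finset.range (K + 1), (Hp n (Fin.last n) - C (b - r)))
      = (Hp n (Fin.last n) - C b - 1)
          * ∏ r ∈ Finset.range K, (Hp n (Fin.last n) - C (b - r)) := by
    rw [sigma_symm_prod_sub_C, sigma_symm_Hp_last hj]
    exact prod_range_succ_sub_one_sub_C _ b K
  have hD : (sigma n j).symm
        (∏ t ∈ Finset.range (m (Fin.last n)), (Hp n (Fin.last n) + C ((n : ℂ) * b - t)))
      = ∏ t ∈ Finset.range (m (Fin.last n)), (Hp n (Fin.last n) + C ((n : ℂ) * b - t - 1)) := by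
    rw [sigma_symm_prod_add_C, sigma_symm_Hp_last hj]
    refine Finset.prod_congr rfl fun t _ => ?_
    rw [map_sub (C : ℂ →+* _) _ 1, map_one]
    ring
  simp only [P', Δm, if_pos hS, if_neg hjl, add_zero, hK, add_tsub_cancel_right]
  rw [map_smul, map_mul, map_mul, smul_smul, inv_mul_coef_add_single haj,
    sigma_symm_prod_compl_add_single hj hS, hB, hD]
  simp only [smul_eq_C_mul]
  ring

lemma P'_add_single_last (hS : Fin.last n ∈ S) (hlast : a (Fin.last n) = 1) :
    (m (Fin.last n) + 1 : ℂ) • P' n b S a N (fun l => m l + if l = Fin.last n then 1 else 0)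
      = (Hp n (Fin.last n) + C ((n : ℂ) * b)) * Δm n b S a N m := by
  have hcoef := inv_mul_coef_add_single (hlast ▸ one_ne_zero) m
  rw [hlast, inv_one, one_mul] at hcoef
  have hA : ∏ s ∈ Sᶜ.erase (Fin.last n), ∏ k ∈ Finset.range
        (m s + if s = Fin.last n then 1 else 0), (Hp n s - C (b + k + 1))
      = ∏ s ∈ Sᶜ, ∏ k ∈ Finset.range (m s), (Hp n s - C (b + k + 1)) := by
    rw [Finset.erase_eq_of_notMem (Finset.notMem_compl.2 hS)]
    refine Finset.prod_congr rfl fun s hs => ?_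
    rw [if_neg fun (h : s = Fin.last n) => Finset.mem_compl.1 hs (h ▸ hS), add_zero]
  simp only [P', Δm, if_pos hS, hA, ↓reduceIte, prod_range_succ_add_C_sub]
  rw [← Nat.sub_sub, smul_smul, hcoef]
  simp only [smul_eq_C_mul]
  ring

end Identities

theorem statement13_general (n : ℕ) (b : ℂ) (S : Finset (Fin (n + 1)))
    (a : Fin (n + 1) → ℂ) (ha : ∀ j, a j ≠ 0) (halast : a (Fin.last n) = 1)
    (hS : Fin.last n ∈ S) (m : Fin (n + 1) → ℕ) (N : ℕ) (hN : (∑ j, m j) + 1 ≤ N) :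
    (∀ j : Fin (n + 1), (j : ℕ) < n →
      ((a j)⁻¹ * (m j + 1 : ℂ)) •
          (sigma n j).symm (P' n b S a N (fun l => m l + if l = j then 1 else 0))
        = if j ∈ S then (Hp n (Fin.last n) - C b - 1) * Δm n b S a N m
          else (Hp n j - C b) * ((Hp n (Fin.last n) - C b - 1) * Δm n b S a N m)) ∧
    (m (Fin.last n) + 1 : ℂ) •
        P' n b S a N (fun l => m l + if l = Fin.last n then 1 else 0)
      = (Hp n (Fin.last n) + C ((n : ℂ) * b)) * Δm n b S a N m := by
  have hlast : m (Fin.last n) < N :=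
    (Finset.single_le_sum (fun j _ => Nat.zero_le (m j)) (Finset.mem_univ _)).trans_lt hN
  refine ⟨fun j hj => ?_, P'_add_single_last hS halast⟩
  rw [sigma_symm_P'_add_single hj hS (ha j) hlast]
  split_ifs
  · exact one_mul _
  · rfl

/-- Lemma 7(1), second family of identities (`n+1 ∈ S`, `N ≥ |m̄| + 1`): for `1 ≤ j ≤ n`,
`a_j⁻¹ (m_j+1) σ_j⁻¹(P'_{m̄+ε_j}(S,a)) = (h_{n+1} - b - 1) Δ_{m̄}(S,a)` if `j ∈ S`,
`= (h_j - b)(h_{n+1} - b - 1) Δ_{m̄}(S,a)` if `j ∉ S`; moreover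
`(m_{n+1}+1) P'_{m̄+ε_{n+1}}(S,a) = (h_{n+1} + nb) Δ_{m̄}(S,a)`. -/
theorem statement13 (n : ℕ) (hn : 1 ≤ n) (b : ℂ) (S : Finset (Fin (n + 1)))
    (a : Fin (n + 1) → ℂ) (ha : ∀ j, a j ≠ 0) (halast : a (Fin.last n) = 1)
    (hS : Fin.last n ∈ S) (m : Fin (n + 1) → ℕ) (N : ℕ) (hN : (∑ j, m j) + 1 ≤ N) :
    (∀ j : Fin (n + 1), (j : ℕ) < n →
      ((a j)⁻¹ * (m j + 1 : ℂ)) •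
          (sigma n j).symm (P' n b S a N (fun l => m l + if l = j then 1 else 0))
        = if j ∈ S then (Hp n (Fin.last n) - C b - 1) * Δm n b S a N m
          else (Hp n j - C b) * ((Hp n (Fin.last n) - C b - 1) * Δm n b S a N m)) ∧
    (m (Fin.last n) + 1 : ℂ) •
        P' n b S a N (fun l => m l + if l = Fin.last n then 1 else 0)
      = (Hp n (Fin.last n) + C ((n : ℂ) * b)) * Δm n b S a N m :=
  statement13_general n b S a ha halast hS m N hN
end
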